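/- arXiv:math/0202306 — 2 statements merged into one kernel-verified Lean document; each statement's English description precedes it below -/
import Mathlib

section
/- Let A be a unital Banach algebra and let (G, 𝔄) be a Gelfand theory for A. Then 𝔄 is unital and G is a unital homomorphism, i.e., G maps the identity of A to the identity of 𝔄. -/
open scoped Pointwise

/-- A `ℂ`-submodule `L` of a (possibly non-unital) algebra `A` is a left ideal if it is
closed under left multiplication by arbitrary elements of `A`. -/
def IsLeftIdeal {A : Type*} [NonUnitalNonAssocRing A] [Module ℂ A]
    (L : Submodule ℂ A) : Prop :=
  ∀ a : A, ∀ x ∈ L, a * x ∈ L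

/-- A left ideal `L` is modular if there is a right modular identity `u`,
i.e. `a * u - a ∈ L` for all `a`. -/
def IsModularLeft {A : Type*} [NonUnitalNonAssocRing A] [Module ℂ A]
    (L : Submodule ℂ A) : Prop :=
  ∃ u : A, ∀ a : A, a * u - a ∈ L

/-- `L` is a maximal modular left ideal: a proper modular left ideal which is maximal among
proper left ideals. -/
def IsMaximalModularLeftIdeal {A : Type*} [NonUnitalNonAssocRing A] [Module ℂ A]
    (L : Submodule ℂ A) : Prop :=
  IsLeftIdeal L ∧ IsModularLeft L ∧ L ≠ ⊤ ∧
    ∀ M : Submodule ℂ A, IsLeftIdeal M → M ≠ ⊤ → L ≤ M → M = L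

/-- `(G, 𝔄)` is a Gelfand theory for `A`:
(G1) `𝔄` is a C*-algebra and `G : A → 𝔄` is an algebra homomorphism;
(G2) `L ↦ G⁻¹(L)` is a bijection between the maximal modular left ideals of `𝔄` and of `A`;
(G3) for each maximal modular left ideal `L` of `𝔄`, the induced map `A/G⁻¹(L) → 𝔄/L` has
dense range; equivalently (via the open quotient map `𝔄 → 𝔄/L`), the set `G(A) + L` is
dense in `𝔄`. -/
def IsGelfandTheory {A 𝔄 : Type*}
    [NonUnitalNormedRing A] [NormedSpace ℂ A] [IsScalarTower ℂ A A] [SMulCommClass ℂ A A]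
    [NonUnitalNormedRing 𝔄] [StarRing 𝔄] [CStarRing 𝔄] [NormedSpace ℂ 𝔄]
    [IsScalarTower ℂ 𝔄 𝔄] [SMulCommClass ℂ 𝔄 𝔄] [StarModule ℂ 𝔄] [CompleteSpace 𝔄]
    (G : A →ₙₐ[ℂ] 𝔄) : Prop :=
  Set.BijOn (fun L : Submodule ℂ 𝔄 => L.comap (LinearMapClass.linearMap G))
      {L | IsMaximalModularLeftIdeal L} {L | IsMaximalModularLeftIdeal L} ∧
    ∀ L : Submodule ℂ 𝔄, IsMaximalModularLeftIdeal L →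
      Dense (Set.range ⇑G + (L : Set 𝔄))

/-!
Put `e = G 1`. Since `e * G a = G a` and `G(A) + L` is dense, `e * x - x` lies in the closure of
every maximal modular left ideal `L` of `𝔄`. Such an `L` is closed: if `u` is a right modular
identity for `L` and `l ∈ L` with `‖u - l‖ < 1`, then `l - u` is quasiregular, which forces
`u ∈ L`. The maximal modular left ideals of a C⋆-algebra intersect in `0`: for `z ≠ 0` the element
`k = z⋆z / ‖z⋆z‖` has `1` in its spectrum, so the modular left ideal `{x * k - x}` misses `k`, and
Zorn's lemma enlarges it to a maximal modular left ideal, which then cannot contain `z`. So `e` is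
a left identity, and applying `⋆` shows that it is a right identity as well.
-/

section LeftIdeal

variable {R : Type*} [NonUnitalRing R] [Module ℂ R] {J : Submodule ℂ R}

theorem IsLeftIdeal.eq_top_of_modularIdentity_mem (hJ : IsLeftIdeal J) {u : R}
    (hu : ∀ a : R, a * u - a ∈ J) (huJ : u ∈ J) : J = ⊤ :=
  Submodule.eq_top_iff'.2 fun x => by simpa using J.sub_mem (hJ x u huJ) (hu x)

theorem IsLeftIdeal.mem_of_isQuasiregular_sub (hJ : IsLeftIdeal J) {u : R}
    (hu : ∀ a : R, a * u - a ∈ J) {l : R} (hl : l ∈ J) (hq : IsQuasiregular (l - u)) :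
    u ∈ J := by
  obtain ⟨y, -, hy⟩ := isQuasiregular_iff.1 hq
  have hul : u - l = y * l - (y * u - y) := by
    rw [← sub_eq_zero, ← neg_eq_zero, ← hy]; noncomm_ring
  have hulJ : u - l ∈ J := hul ▸ J.sub_mem (hJ y l hl) (hu y)
  simpa using J.add_mem hulJ hl

theorem IsLeftIdeal.exists_isMaximalModularLeftIdeal_le (hJ : IsLeftIdeal J) {u : R}
    (hu : ∀ a : R, a * u - a ∈ J) (huJ : u ∉ J) :
    ∃ L, IsMaximalModularLeftIdeal L ∧ J ≤ L := by
  let S : Set (Submodule ℂ R) := {K | IsLeftIdeal K ∧ J ≤ K ∧ u ∉ K}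
  have hchain : ∀ c ⊆ S, IsChain (· ≤ ·) c → ∀ K ∈ c, ∃ ub ∈ S, ∀ K' ∈ c, K' ≤ ub := by
    intro c hcS hc K hK
    have hmem (x : R) : x ∈ sSup c ↔ ∃ K' ∈ c, x ∈ K' :=
      Submodule.mem_sSup_of_directed ⟨K, hK⟩ hc.directedOn
    refine ⟨sSup c, ⟨fun a x hx => ?_, (hcS hK).2.1.trans (le_sSup hK), fun hu' => ?_⟩,
      fun _ => le_sSup⟩
    · obtain ⟨K', hK', hxK'⟩ := (hmem x).1 hx
      exact (hmem _).2 ⟨K', hK', (hcS hK').1 a x hxK'⟩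
    · obtain ⟨K', hK', huK'⟩ := (hmem u).1 hu'
      exact (hcS hK').2.2 huK'
  obtain ⟨L, hJL, ⟨hL, -, huL⟩, hLmax⟩ := zorn_le_nonempty₀ S hchain J ⟨hJ, le_rfl, huJ⟩
  refine ⟨L, ⟨hL, ⟨u, fun a => hJL (hu a)⟩, fun h => huL (h ▸ Submodule.mem_top), ?_⟩, hJL⟩
  intro M hM hMtop hLM
  have huM : u ∉ M := fun h =>
    hMtop (hM.eq_top_of_modularIdentity_mem (fun a => hLM (hJL (hu a))) h)
  exact le_antisymm (hLmax ⟨hM, hJL.trans hLM, huM⟩ hLM) hLM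

theorem IsLeftIdeal.topologicalClosure [TopologicalSpace R] [IsTopologicalRing R]
    [ContinuousConstSMul ℂ R] (hJ : IsLeftIdeal J) : IsLeftIdeal J.topologicalClosure :=
  fun a _ hx => map_mem_closure (continuous_const_mul a) hx fun y hy => hJ a y hy

theorem IsLeftIdeal.mul_sub_mem_of_dense_add [TopologicalSpace R] [IsTopologicalRing R]
    (hJ : IsLeftIdeal J) (hJc : IsClosed (J : Set R)) {S : Set R} (hS : Dense (S + (J : Set R)))
    {e : R} (he : ∀ s ∈ S, e * s = s) (x : R) : e * x - x ∈ J := by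
  have hpre : IsClosed ((fun y => e * y - y) ⁻¹' (J : Set R)) :=
    hJc.preimage ((continuous_const_mul e).sub continuous_id)
  refine hpre.closure_subset_iff.2 ?_ (hS.closure_eq.symm ▸ Set.mem_univ x)
  rintro _ ⟨s, hs, l, hl, rfl⟩
  have : e * (s + l) - (s + l) = e * l - l := by rw [mul_add, he s hs]; abel
  simpa only [Set.mem_preimage, SetLike.mem_coe, this] using J.sub_mem (hJ e l hl) hl

end LeftIdeal

section ModularLeftIdeal

variable {R : Type*} [NonUnitalRing R] [Module ℂ R] [IsScalarTower ℂ R R]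

def modularLeftIdeal (k : R) : Submodule ℂ R :=
  LinearMap.range (LinearMap.mulRight ℂ k - LinearMap.id)

theorem mul_sub_mem_modularLeftIdeal (k a : R) : a * k - a ∈ modularLeftIdeal k :=
  ⟨a, rfl⟩

theorem isLeftIdeal_modularLeftIdeal (k : R) : IsLeftIdeal (modularLeftIdeal k) := by
  rintro a _ ⟨x, rfl⟩
  simpa [mul_sub, mul_assoc] using mul_sub_mem_modularLeftIdeal k (a * x)

end ModularLeftIdeal

section BanachAlgebra

variable {B : Type*} [NonUnitalNormedRing B] [NormedSpace ℂ B] [IsScalarTower ℂ B B]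
  [SMulCommClass ℂ B B] [CompleteSpace B]

theorem isQuasiregular_neg_of_norm_lt_one {a : B} (ha : ‖a‖ < 1) : IsQuasiregular (-a) := by
  have hunit : IsUnit (1 - WithLp.toLp 1 (a : Unitization ℂ B)) :=
    (Units.oneSub _ (by rwa [WithLp.unitization_norm_inr])).isUnit
  rw [← Unitization.isQuasiregular_inr_iff (R := ℂ), isQuasiregular_iff_isUnit]
  have := hunit.map (WithLp.unitizationAlgEquiv ℂ (A := B))
  rw [map_sub, map_one] at this
  simpa [sub_eq_add_neg] using this

theorem IsMaximalModularLeftIdeal.isClosed {L : Submodule ℂ B}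
    (hL : IsMaximalModularLeftIdeal L) : IsClosed (L : Set B) := by
  obtain ⟨hleft, ⟨u, hu⟩, hne, hmax⟩ := hL
  have hu_closure : u ∉ L.topologicalClosure := by
    refine fun h => hne (hleft.eq_top_of_modularIdentity_mem hu ?_)
    obtain ⟨l, hl, hdist⟩ := Metric.mem_closure_iff.1 h 1 one_pos
    refine hleft.mem_of_isQuasiregular_sub hu hl ?_
    simpa using isQuasiregular_neg_of_norm_lt_one (a := u - l) (by rwa [← dist_eq_norm])
  have := hmax _ hleft.topologicalClosure (fun h => hu_closure (h ▸ Submodule.mem_top))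
    L.le_topologicalClosure
  exact this ▸ L.isClosed_topologicalClosure

end BanachAlgebra

theorem IsSelfAdjoint.isUnit_of_mul_eq_one {M : Type*} [Monoid M] [StarMul M] {a b : M}
    (ha : IsSelfAdjoint a) (h : b * a = 1) : IsUnit a := by
  have h' : a * star b = 1 := by rw [← ha.star_eq, ← star_mul, h, star_one]
  exact ⟨⟨a, b, by rwa [left_inv_eq_right_inv h h'], h⟩, rfl⟩

theorem mul_eq_left_of_forall_mul_eq_right {M : Type*} [Mul M] [StarMul M] {e : M}
    (he : ∀ x, e * x = x) (x : M) : x * e = x := by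
  have hstar (x : M) : x * star e = x := by simpa using congrArg star (he (star x))
  have hsa : star e = e := by simpa [he] using hstar e
  simpa [hsa] using hstar x

section CStarAlgebra

variable {E : Type*} [NonUnitalCStarAlgebra E]

theorem self_notMem_modularLeftIdeal_of_one_mem_spectrum {k : E} (hk : IsSelfAdjoint k)
    (h1 : (1 : ℝ) ∈ spectrum ℝ (k : Unitization ℂ E)) : k ∉ modularLeftIdeal k := by
  rintro ⟨x, hx⟩
  replace hx : x * k - x = k := hx
  rw [spectrum.mem_iff, map_one] at h1
  refine h1 (((IsSelfAdjoint.one _).sub (hk.inr ℂ)).isUnit_of_mul_eq_one (b := 1 - x) ?_)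
  have : ((x * k - x : E) : Unitization ℂ E) = k := congrArg _ hx
  rw [Unitization.inr_sub, Unitization.inr_mul] at this
  rw [show (1 - (x : Unitization ℂ E)) * (1 - k) = 1 + ((x * k - x) - k) by noncomm_ring,
    this, sub_self, add_zero]

theorem CStarAlgebra.one_mem_spectrum_inv_norm_smul {A : Type*} [CStarAlgebra A] [PartialOrder A]
    [StarOrderedRing A] {a : A} (ha : 0 ≤ a) (ha0 : a ≠ 0) :
    (1 : ℝ) ∈ spectrum ℝ (‖a‖⁻¹ • a) := by
  have : Nontrivial A := ⟨⟨a, 0, ha0⟩⟩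
  have hne : ‖a‖ ≠ 0 := norm_ne_zero_iff.2 ha0
  have := (spectrum.smul_mem_smul_iff (r := Units.mk0 _ (inv_ne_zero hne))).2
    (CStarAlgebra.norm_mem_spectrum_of_nonneg ha)
  simpa [Units.smul_def, inv_mul_cancel₀ hne] using this

theorem exists_isMaximalModularLeftIdeal_notMem {z : E} (hz : z ≠ 0) :
    ∃ L : Submodule ℂ E, IsMaximalModularLeftIdeal L ∧ z ∉ L := by
  set h := star z * z
  have hh : (h : Unitization ℂ E) ≠ 0 :=
    (Unitization.inr_injective.ne ((CStarRing.star_mul_self_ne_zero_iff z).2 hz)).trans_eq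
      (Unitization.inr_zero ℂ)
  have hpos : 0 ≤ (h : Unitization ℂ E) := by simp [h]
  set k : E := ‖h‖⁻¹ • h
  have hk : IsSelfAdjoint k := (IsSelfAdjoint.all _).smul (.star_mul_self z)
  have h1 : (1 : ℝ) ∈ spectrum ℝ (k : Unitization ℂ E) := by
    simpa [k, Unitization.norm_inr] using CStarAlgebra.one_mem_spectrum_inv_norm_smul hpos hh
  obtain ⟨L, hL, hkL⟩ := (isLeftIdeal_modularLeftIdeal k).exists_isMaximalModularLeftIdeal_le
    (mul_sub_mem_modularLeftIdeal k) (self_notMem_modularLeftIdeal_of_one_mem_spectrum hk h1)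
  refine ⟨L, hL, fun hzL => hL.2.2.1 (hL.1.eq_top_of_modularIdentity_mem
    (fun a => hkL (mul_sub_mem_modularLeftIdeal k a)) ?_)⟩
  exact L.smul_of_tower_mem _ (hL.1 _ _ hzL)

end CStarAlgebra

theorem stmt_3_general {A 𝔄 : Type*} [NormedRing A] [NormedAlgebra ℂ A]
    [NonUnitalNormedRing 𝔄] [StarRing 𝔄] [CStarRing 𝔄] [NormedSpace ℂ 𝔄]
    [IsScalarTower ℂ 𝔄 𝔄] [SMulCommClass ℂ 𝔄 𝔄] [StarModule ℂ 𝔄] [CompleteSpace 𝔄]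
    (G : A →ₙₐ[ℂ] 𝔄) (hG : IsGelfandTheory G) :
    ∃ e : 𝔄, (∀ x : 𝔄, e * x = x ∧ x * e = x) ∧ G 1 = e := by
  let : NonUnitalCStarAlgebra 𝔄 := {}
  have hleft (x : 𝔄) : G 1 * x = x := by
    by_contra hx
    obtain ⟨L, hL, hxL⟩ := exists_isMaximalModularLeftIdeal_notMem (sub_ne_zero.2 hx)
    refine hxL (hL.1.mul_sub_mem_of_dense_add hL.isClosed (hG.2 L hL) ?_ x)
    rintro _ ⟨a, rfl⟩
    rw [← map_mul, one_mul]
  exact ⟨G 1, fun x => ⟨hleft x, mul_eq_left_of_forall_mul_eq_right hleft x⟩, rfl⟩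

/-- If `A` is a unital Banach algebra and `(G, 𝔄)` is a Gelfand theory for `A`, then `𝔄`
is unital and `G` maps the identity of `A` to the identity of `𝔄`. -/
theorem stmt_3 {A 𝔄 : Type*} [NormedRing A] [NormedAlgebra ℂ A] [CompleteSpace A]
    [NonUnitalNormedRing 𝔄] [StarRing 𝔄] [CStarRing 𝔄] [NormedSpace ℂ 𝔄]
    [IsScalarTower ℂ 𝔄 𝔄] [SMulCommClass ℂ 𝔄 𝔄] [StarModule ℂ 𝔄] [CompleteSpace 𝔄]
    (G : A →ₙₐ[ℂ] 𝔄) (hG : IsGelfandTheory G) :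
    ∃ e : 𝔄, (∀ x : 𝔄, e * x = x ∧ x * e = x) ∧ G 1 = e :=
  stmt_3_general G hG
end

section
/- Let A be an algebra, I an ideal of A, and π an irreducible representation of I on a linear space E. Then π extends to a unique irreducible representation of A on E. Conversely, if π is an irreducible representation of A on E with π(I)E ≠ {0}, then the restriction π|_I is an irreducible representation of I on E. -/
open scoped TensorProduct

/-- A representation `π` of a (possibly non-unital) complex algebra on a vector space `E`
is irreducible if it is non-zero and the only invariant subspaces of `E` are `⊥` and `⊤`. -/
def IsIrreducibleRep {A : Type*} [NonUnitalNonAssocRing A] [Module ℂ A] {E : Type*}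
    [AddCommGroup E] [Module ℂ E] (π : A →ₙₐ[ℂ] Module.End ℂ E) : Prop :=
  (∃ a, π a ≠ 0) ∧
    ∀ p : Submodule ℂ E, (∀ a : A, ∀ v ∈ p, π a v ∈ p) → p = ⊥ ∨ p = ⊤

/-- `π` (given as a function on `A`, only its values on `I` being relevant) is an
irreducible representation of the ideal `I` on `E`: it is additive, homogeneous and
multiplicative on `I`, non-zero on `I`, and the only `π(I)`-invariant subspaces of `E` are
`⊥` and `⊤`. -/
def IsIrreducibleRepOn {A : Type*} [NonUnitalNonAssocRing A] [Module ℂ A] {E : Type*}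
    [AddCommGroup E] [Module ℂ E] (I : Submodule ℂ A) (π : A → Module.End ℂ E) : Prop :=
  (∀ x ∈ I, ∀ y ∈ I, π (x + y) = π x + π y) ∧
    (∀ (c : ℂ), ∀ x ∈ I, π (c • x) = c • π x) ∧
    (∀ x ∈ I, ∀ y ∈ I, π (x * y) = π x * π y) ∧
    (∃ x ∈ I, π x ≠ 0) ∧
    ∀ p : Submodule ℂ E, (∀ x ∈ I, ∀ v ∈ p, π x v ∈ p) → p = ⊥ ∨ p = ⊤

/-- Let `I` be a two-sided ideal of an algebra `A`. (a) Every irreducible representation of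
`I` on a linear space `E` extends to a unique irreducible representation of `A` on `E`.
(b) Conversely, if `Π` is an irreducible representation of `A` on `E` with `Π(I)E ≠ 0`,
then the restriction of `Π` to `I` is an irreducible representation of `I` on `E`. -/
theorem stmt_11 {A : Type*} [NonUnitalRing A] [Module ℂ A]
    [IsScalarTower ℂ A A] [SMulCommClass ℂ A A]
    {E : Type*} [AddCommGroup E] [Module ℂ E]
    (I : Submodule ℂ A) (hI : ∀ a : A, ∀ x ∈ I, a * x ∈ I ∧ x * a ∈ I) :
    (∀ π : A → Module.End ℂ E, IsIrreducibleRepOn I π →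
        ∃! ρ : A →ₙₐ[ℂ] Module.End ℂ E, IsIrreducibleRep ρ ∧ ∀ x ∈ I, ρ x = π x) ∧
      ∀ ρ : A →ₙₐ[ℂ] Module.End ℂ E, IsIrreducibleRep ρ → (∃ x ∈ I, ρ x ≠ 0) →
        IsIrreducibleRepOn I (fun a => ρ a) := by
  constructor
  · -- Part (a)
    intro π hπ
    obtain ⟨hadd, hsmul, hmul, ⟨x₀, hx₀I, hx₀⟩, hirr⟩ := hπ
    classical
    -- The common kernel N of π(I) is ⊥
    set N : Submodule ℂ E := ⨅ x : I, LinearMap.ker (π x) with hNdef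
    have hmemN : ∀ v : E, v ∈ N ↔ ∀ x ∈ I, π x v = 0 := by
      intro v
      simp only [hNdef, Submodule.mem_iInf, LinearMap.mem_ker, Subtype.forall]
    have hNinv : ∀ x ∈ I, ∀ v ∈ N, π x v ∈ N := by
      intro x hx v hv
      rw [hmemN] at hv ⊢
      intro y hy
      have hyx : y * x ∈ I := (hI y x hx).1
      calc π y (π x v) = ((π y) * (π x)) v := rfl
        _ = π (y * x) v := by rw [hmul y hy x hx]
        _ = 0 := hv _ hyx
    have hN : N = ⊥ := by
      rcases hirr N hNinv with h | h
      · exact h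
      · exfalso
        apply hx₀
        ext v
        have : v ∈ N := h ▸ Submodule.mem_top
        rw [hmemN] at this
        exact this x₀ hx₀I
    -- span of π(I)E is ⊤
    set S : Set E := {w : E | ∃ x ∈ I, ∃ v : E, π x v = w} with hSdef
    set P : Submodule ℂ E := Submodule.span ℂ S with hPdef
    have hPtop : P = ⊤ := by
      rcases hirr P (fun x hx v _ => Submodule.subset_span ⟨x, hx, v, rfl⟩) with h | h
      · exfalso
        apply hx₀
        ext v
        have hv : π x₀ v ∈ P := Submodule.subset_span ⟨x₀, hx₀I, v, rfl⟩
        rw [h, Submodule.mem_bot] at hv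
        exact hv
      · exact h
    -- extension lemma on the spanning set
    have hext : ∀ f g : Module.End ℂ E, (∀ x ∈ I, ∀ v : E, f (π x v) = g (π x v)) →
        f = g := by
      intro f g h
      apply LinearMap.ext
      intro v
      have hv : v ∈ P := hPtop ▸ Submodule.mem_top
      induction hv using Submodule.span_induction with
      | mem w hw => obtain ⟨x, hx, u, rfl⟩ := hw; exact h x hx u
      | zero => simp
      | add w₁ w₂ _ _ h1 h2 => simp [map_add, h1, h2]
      | smul c w _ h1 => simp [map_smul, h1]
    -- bilinear maps
    have coe_add : ∀ x y : I, ((x + y : I) : A) = (x : A) + (y : A) := fun _ _ => rfl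
    have coe_smul : ∀ (c : ℂ) (x : I), ((c • x : I) : A) = c • (x : A) := fun _ _ => rfl
    set Bs : I →ₗ[ℂ] Module.End ℂ E :=
      { toFun := fun x => π x
        map_add' := fun x y => hadd x x.2 y y.2
        map_smul' := fun c x => hsmul c x x.2 } with hBsdef
    set s : (I ⊗[ℂ] E) →ₗ[ℂ] E := TensorProduct.lift Bs with hsdef
    have hs_tmul : ∀ (x : I) (v : E), s (x ⊗ₜ v) = π x v := fun x v => rfl
    have hs : Function.Surjective s := by
      rw [← LinearMap.range_eq_top]
      apply top_unique
      rw [← hPtop, hPdef]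
      apply Submodule.span_le.mpr
      rintro w ⟨x, hx, v, rfl⟩
      exact ⟨(⟨x, hx⟩ : I) ⊗ₜ v, rfl⟩
    set t : A → (I ⊗[ℂ] E) →ₗ[ℂ] E := fun a => TensorProduct.lift
      { toFun := fun x => π (a * x)
        map_add' := fun x y => by
          show π (a * ((x : A) + (y : A))) = π (a * x) + π (a * y)
          rw [mul_add]
          exact hadd _ (hI a x x.2).1 _ (hI a y y.2).1
        map_smul' := fun c x => by
          show π (a * (c • (x : A))) = c • π (a * x)
          rw [mul_smul_comm]
          exact hsmul c _ (hI a x x.2).1 } with htdef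
    have ht_tmul : ∀ (a : A) (x : I) (v : E), t a (x ⊗ₜ v) = π (a * x) v := fun _ _ _ => rfl
    have hker : ∀ a : A, LinearMap.ker s ≤ LinearMap.ker (t a) := by
      intro a w hw
      rw [LinearMap.mem_ker] at hw ⊢
      have hmem : t a w ∈ N := by
        rw [hmemN]
        intro x hx
        have hcomp : (π x).comp (t a) = (π (x * a)).comp s := by
          apply TensorProduct.ext'
          intro y v
          have hay : a * (y : A) ∈ I := (hI a y y.2).1
          have hxa : x * a ∈ I := (hI a x hx).2
          calc π x (t a (y ⊗ₜ v)) = π x (π (a * y) v) := by rw [ht_tmul]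
            _ = π (x * (a * y)) v := by rw [hmul x hx _ hay]; rfl
            _ = π ((x * a) * y) v := by rw [mul_assoc]
            _ = π (x * a) (π y v) := by rw [hmul _ hxa _ y.2]; rfl
            _ = π (x * a) (s (y ⊗ₜ v)) := by rw [hs_tmul]
        calc π x (t a w) = (π (x * a)) (s w) := by
              have := congrArg (fun f => f w) hcomp; simpa using this
          _ = 0 := by rw [hw, map_zero]
      rw [hN, Submodule.mem_bot] at hmem
      exact hmem
    set e : ((I ⊗[ℂ] E) ⧸ LinearMap.ker s) ≃ₗ[ℂ] E := s.quotKerEquivOfSurjective hs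
      with hedef
    have he_mk : ∀ w : I ⊗[ℂ] E, e (Submodule.Quotient.mk w) = s w := fun w => rfl
    set ρf : A → Module.End ℂ E := fun a =>
      ((LinearMap.ker s).liftQ (t a) (hker a)).comp e.symm.toLinearMap with hρfdef
    have key : ∀ (a : A) (w : I ⊗[ℂ] E), ρf a (s w) = t a w := by
      intro a w
      have h1 : e.symm (s w) = Submodule.Quotient.mk w := by
        apply e.injective
        rw [e.apply_symm_apply, he_mk]
      show ((LinearMap.ker s).liftQ (t a) (hker a)) (e.symm (s w)) = t a w
      rw [h1, Submodule.liftQ_apply]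
    have key2 : ∀ (a : A), ∀ x ∈ I, ∀ v : E, ρf a (π x v) = π (a * x) v := by
      intro a x hx v
      have := key a ((⟨x, hx⟩ : I) ⊗ₜ v)
      rwa [hs_tmul, ht_tmul] at this
    set ρ : A →ₙₐ[ℂ] Module.End ℂ E :=
      { toFun := ρf
        map_add' := fun a b => hext _ _ fun x hx v => by
          have h1 : (a + b) * x = a * x + b * x := add_mul a b x
          rw [key2 (a + b) x hx v, h1, hadd _ (hI a x hx).1 _ (hI b x hx).1]
          simp [key2 a x hx v, key2 b x hx v]
        map_smul' := fun c a => hext _ _ fun x hx v => by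
          have h1 : (c • a) * x = c • (a * x) := smul_mul_assoc c a x
          rw [key2 (c • a) x hx v, h1, hsmul c _ (hI a x hx).1]
          simp [key2 a x hx v]
        map_zero' := hext _ _ fun x hx v => by
          have h0 : π (0 : A) = 0 := by
            have := hsmul 0 0 I.zero_mem
            simpa using this
          rw [key2 0 x hx v, zero_mul, h0]
          simp
        map_mul' := fun a b => hext _ _ fun x hx v => by
          rw [key2 (a * b) x hx v, mul_assoc]
          show π (a * (b * x)) v = ρf a (ρf b (π x v))
          rw [key2 b x hx v, key2 a (b * x) (hI b x hx).1 v] } with hρdef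
    have hρf : ∀ a : A, ρ a = ρf a := fun a => rfl
    have hρext : ∀ x ∈ I, ρ x = π x := by
      intro x hx
      rw [hρf]
      apply hext
      intro y hy v
      rw [key2 x y hy v, hmul x hx y hy]
      rfl
    refine ⟨ρ, ⟨⟨⟨x₀, by rw [hρext x₀ hx₀I]; exact hx₀⟩, ?_⟩, hρext⟩, ?_⟩
    · intro p hp
      apply hirr p
      intro x hx v hv
      have := hp x v hv
      rwa [hρext x hx] at this
    · rintro ρ' ⟨_, hρ'ext⟩
      apply DFunLike.ext
      intro a
      apply hext
      intro x hx v
      rw [hρf, key2 a x hx v, ← hρ'ext x hx]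
      calc ρ' a (ρ' x v) = (ρ' a * ρ' x) v := rfl
        _ = ρ' (a * x) v := by rw [← map_mul]
        _ = π (a * x) v := by rw [hρ'ext _ (hI a x hx).1]
  · -- Part (b)
    rintro ρ ⟨_, hirr⟩ ⟨x₀, hx₀I, hx₀⟩
    refine ⟨fun x _ y _ => map_add ρ x y, fun c x _ => map_smul ρ c x,
      fun x _ y _ => map_mul ρ x y, ⟨x₀, hx₀I, hx₀⟩, ?_⟩
    intro p hp
    set q : Submodule ℂ E := Submodule.span ℂ {w : E | ∃ x ∈ I, ∃ v ∈ p, ρ x v = w}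
      with hqdef
    have hq : ∀ a : A, ∀ w ∈ q, ρ a w ∈ q := by
      intro a w hw
      have hle : q ≤ q.comap (ρ a) := by
        rw [hqdef]
        apply Submodule.span_le.mpr
        rintro w ⟨x, hx, v, hv, rfl⟩
        have : ρ a (ρ x v) = ρ (a * x) v := by rw [map_mul]; rfl
        exact Submodule.subset_span ⟨a * x, (hI a x hx).1, v, hv, this.symm⟩
      exact hle hw
    rcases hirr q hq with hq0 | hqtop
    · -- common kernel argument: p = ⊥
      left
      set N : Submodule ℂ E := ⨅ x : I, LinearMap.ker (ρ x) with hNdef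
      have hmemN : ∀ v : E, v ∈ N ↔ ∀ x ∈ I, ρ x v = 0 := by
        intro v
        simp only [hNdef, Submodule.mem_iInf, LinearMap.mem_ker, Subtype.forall]
      have hNinv : ∀ a : A, ∀ v ∈ N, ρ a v ∈ N := by
        intro a v hv
        rw [hmemN] at hv ⊢
        intro x hx
        calc ρ x (ρ a v) = ρ (x * a) v := by rw [map_mul]; rfl
          _ = 0 := hv _ (hI a x hx).2
      have hN : N = ⊥ := by
        rcases hirr N hNinv with h | h
        · exact h
        · exfalso
          apply hx₀
          ext v
          have : v ∈ N := h ▸ Submodule.mem_top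
          rw [hmemN] at this
          exact this x₀ hx₀I
      have hpN : p ≤ N := by
        intro v hv
        rw [hmemN]
        intro x hx
        have : ρ x v ∈ q := Submodule.subset_span ⟨x, hx, v, hv, rfl⟩
        rwa [hq0, Submodule.mem_bot] at this
      exact le_bot_iff.mp (hN ▸ hpN)
    · -- q = ⊤ forces p = ⊤
      right
      apply top_unique
      rw [← hqtop, hqdef]
      apply Submodule.span_le.mpr
      rintro w ⟨x, hx, v, hv, rfl⟩
      exact hp x hx v hv
end
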